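/- Let t > 0, λ > 0, let groupOf : Fin n → Option (Fin G) assign each coordinate either to a group or to no group, and let w ∈ ℝⁿ. Define x* ∈ ℝⁿ coordinatewise by: x*ⱼ = wⱼ if groupOf j is none; and if groupOf j = g, then x*ⱼ = max(1 − t·λ/‖w^{(g)}‖₂, 0)·wⱼ when ‖w^{(g)}‖₂ ≠ 0 and x*ⱼ = 0 when ‖w^{(g)}‖₂ = 0, where w^{(g)} is the restriction of w to group g. Then x* is a global minimizer of the function u ↦ t·λ·Σ_{g=1}^{G} ‖u^{(g)}‖₂ + (1/2)·‖u − w‖₂² over ℝⁿ; that is, groupwise shrinkage realizes the proximal point of t times the group Lasso penalty at w. -/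

import Mathlib

/-- The restriction of `x` to group `g`: keeps the coordinates assigned to `g` and
zeroes out all others. -/
noncomputable def groupRestrict {n G : ℕ} (groupOf : Fin n → Option (Fin G))
    (x : EuclideanSpace ℝ (Fin n)) (g : Fin G) : EuclideanSpace ℝ (Fin n) :=
  WithLp.toLp 2 (fun j => if groupOf j = some g then x j else 0)

theorem shrink_min {E : Type*} [NormedAddCommGroup E] [InnerProductSpace ℝ E]
    (κ : ℝ) (hκ : 0 < κ) (a v : E) :
    κ * ‖(max (1 - κ / ‖a‖) 0 : ℝ) • a‖ + (1/2) * ‖(max (1 - κ / ‖a‖) 0 : ℝ) • a - a‖ ^ 2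
      ≤ κ * ‖v‖ + (1/2) * ‖v - a‖ ^ 2 := by
  by_cases hc : ‖a‖ = 0
  · rw [norm_eq_zero] at hc
    subst hc
    simp only [smul_zero, norm_zero, sub_zero, mul_zero, add_zero, zero_add, ne_eq,
      OfNat.ofNat_ne_zero, not_false_eq_true, zero_pow]
    positivity
  · have hc' : 0 < ‖a‖ := lt_of_le_of_ne (norm_nonneg a) (Ne.symm hc)
    set c := ‖a‖ with hcdef
    set m : ℝ := max (1 - κ / c) 0 with hm
    have hm0 : 0 ≤ m := le_max_right _ _
    have hm1 : m ≤ 1 := by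
      apply max_le _ zero_le_one
      have : 0 < κ / c := div_pos hκ hc'
      linarith
    have h1 : ‖m • a‖ = m * c := by
      rw [norm_smul, Real.norm_eq_abs, abs_of_nonneg hm0]
    have h2 : ‖m • a - a‖ = (1 - m) * c := by
      have h : m • a - a = (m - 1) • a := by rw [sub_smul, one_smul]
      rw [h, norm_smul, Real.norm_eq_abs, abs_of_nonpos (by linarith)]
      ring
    have hexp : ‖v - a‖ ^ 2 = ‖v‖ ^ 2 - 2 * inner ℝ v a + c ^ 2 :=
      norm_sub_sq_real v a
    have hip : (inner ℝ v a : ℝ) ≤ ‖v‖ * c := real_inner_le_norm v a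
    have hv0 : 0 ≤ ‖v‖ := norm_nonneg v
    rw [h1, h2, hexp]
    rcases le_or_gt c κ with hck | hck
    · have hme : m = 0 := by
        rw [hm, max_eq_right]
        have : 1 ≤ κ / c := (one_le_div hc').mpr hck
        linarith
      rw [hme]
      nlinarith [sq_nonneg (‖v‖ - c), sq_nonneg ‖v‖]
    · have hme : m = 1 - κ / c := by
        rw [hm, max_eq_left]
        have : κ / c < 1 := (div_lt_one hc').mpr hck
        linarith
      have hmc : m * c = c - κ := by rw [hme]; field_simp
      have hmc2 : (1 - m) * c = κ := by rw [hme]; field_simp; ring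
      rw [hmc, hmc2]
      nlinarith [sq_nonneg (‖v‖ - (c - κ))]

lemma euc_norm_sq {n : ℕ} (x : EuclideanSpace ℝ (Fin n)) : ‖x‖ ^ 2 = ∑ j, (x j) ^ 2 := by
  rw [EuclideanSpace.norm_eq, Real.sq_sqrt (by positivity)]
  simp [Real.norm_eq_abs, sq_abs]

/-- groupwise shrinkage realizes the proximal point of `t` times the
group Lasso penalty at `w`. -/
theorem group_shrinkage_is_prox {n G : ℕ} (t lam : ℝ) (ht : 0 < t) (hlam : 0 < lam)
    (groupOf : Fin n → Option (Fin G))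
    (w xstar : EuclideanSpace ℝ (Fin n))
    (hnone : ∀ j : Fin n, groupOf j = none → xstar j = w j)
    (hsome : ∀ (j : Fin n) (g : Fin G), groupOf j = some g →
      xstar j =
        if ‖groupRestrict groupOf w g‖ = 0 then 0
        else max (1 - t * lam / ‖groupRestrict groupOf w g‖) 0 * w j) :
    IsMinOn
      (fun u : EuclideanSpace ℝ (Fin n) =>
        t * (lam * ∑ g : Fin G, ‖groupRestrict groupOf u g‖) + (1 / 2) * ‖u - w‖ ^ 2)
      Set.univ xstar := by
  set κ := t * lam with hκdef
  have hκ : 0 < κ := mul_pos ht hlam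
  -- xstar restricted to group g is the shrinkage of w restricted to g
  have hxg : ∀ g : Fin G, groupRestrict groupOf xstar g
      = (max (1 - κ / ‖groupRestrict groupOf w g‖) 0 : ℝ) • groupRestrict groupOf w g := by
    intro g
    ext j
    simp only [groupRestrict, PiLp.smul_apply, PiLp.toLp_apply, smul_eq_mul]
    by_cases hj : groupOf j = some g
    · simp only [hj, if_pos rfl]
      rw [hsome j g hj]
      by_cases hw : ‖groupRestrict groupOf w g‖ = 0
      · rw [if_pos hw]
        have : groupRestrict groupOf w g = 0 := norm_eq_zero.mp hw
        have hwj : w j = 0 := by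
          have := congrArg (fun v => v j) this
          simpa [groupRestrict, PiLp.toLp_apply, hj] using this
        simp [hwj]
      · rw [if_neg hw]; simp [groupRestrict]
    · simp [hj]
  -- decomposition of the objective
  have key : ∀ x : EuclideanSpace ℝ (Fin n),
      t * (lam * ∑ g : Fin G, ‖groupRestrict groupOf x g‖) + (1 / 2) * ‖x - w‖ ^ 2
      = (∑ g : Fin G, (κ * ‖groupRestrict groupOf x g‖
          + (1/2) * ∑ j ∈ Finset.univ.filter (fun j => groupOf j = some g), (x j - w j) ^ 2))
        + (1/2) * ∑ j ∈ Finset.univ.filter (fun j => groupOf j = none), (x j - w j) ^ 2 := by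
    intro x
    have h1 : ‖x - w‖ ^ 2 = ∑ j, (x j - w j) ^ 2 := by
      rw [euc_norm_sq]
      refine Finset.sum_congr rfl fun j _ => ?_
      simp
    have h2 : ∑ j, (x j - w j) ^ 2
        = (∑ o : Option (Fin G), ∑ j ∈ Finset.univ.filter (fun j => groupOf j = o),
            (x j - w j) ^ 2) :=
      (Finset.sum_fiberwise Finset.univ groupOf (fun j => (x j - w j) ^ 2)).symm
    rw [h1, h2, Fintype.sum_option, Finset.sum_add_distrib]
    simp only [Finset.mul_sum, mul_add, ← mul_assoc]
    ring
  intro u _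
  simp only [Set.mem_setOf_eq]
  rw [key u, key xstar]
  have hnonepart : ∑ j ∈ Finset.univ.filter (fun j => groupOf j = none),
      (xstar j - w j) ^ 2 = 0 := by
    apply Finset.sum_eq_zero
    intro j hj
    rw [Finset.mem_filter] at hj
    rw [hnone j hj.2]
    ring
  have hupart : (0:ℝ) ≤ ∑ j ∈ Finset.univ.filter (fun j => groupOf j = none),
      (u j - w j) ^ 2 := Finset.sum_nonneg fun j _ => sq_nonneg _
  gcongr ?_ + ?_
  · apply Finset.sum_le_sum
    intro g _
    have hd : ∀ y : EuclideanSpace ℝ (Fin n),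
        ∑ j ∈ Finset.univ.filter (fun j => groupOf j = some g), (y j - w j) ^ 2
        = ‖groupRestrict groupOf y g - groupRestrict groupOf w g‖ ^ 2 := by
      intro y
      rw [euc_norm_sq, Finset.sum_filter]
      refine Finset.sum_congr rfl fun j _ => ?_
      simp only [PiLp.sub_apply, groupRestrict, PiLp.toLp_apply]
      split <;> simp
    rw [hd u, hd xstar, hxg g]
    exact shrink_min κ hκ (groupRestrict groupOf w g) (groupRestrict groupOf u g)
  · rw [hnonepart]
    simpa using mul_le_mul_of_nonneg_left hupart (by norm_num : (0:ℝ) ≤ 1/2)
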